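/- Let p be an odd prime, q = p^s, r = p^t, k ∈ E(r) and l ≥ 1. Let (λ_n)_{n≥1} and (δ_n)_{n≥0} be sequences in F_q* satisfying (LD): λ_{f(n)} = ε_1^{(−1)^n} λ_n^r and λ_{f(n)+i} = −v_{i,k} ε_1^{(−1)^{n+i}} δ_n^{(−1)^i} for n ≥ 1 and 1 ≤ i ≤ 2k (for a fixed ε_1 ∈ F_q*). Then (δ_n) satisfies (D_1): δ_n = 2kθ_k^{i(n)}λ_n^r − (ω_kδ_{n−1})^{−1} for all n ≥ 1, if and only if the following three conditions hold: (II_0) δ_n = 2kθ_kλ_n^r + (2kθ_k)²δ_{n−1}^{−1} for 1 ≤ n ≤ l (equivalently δ_n = 2kθ_k[λ_n^r,…,λ_1^r, δ_0/(2kθ_k)]); (D_2) δ_{f(n)} + (ω_kδ_{f(n)−1})^{−1} = θ_k ε_1^{r(−1)^n}(δ_n^r + (ω_kδ_{n−1})^{−r}) for all n ≥ 1; and (D_3) δ_{f(n)+i} + (ω_kδ_{f(n)+i−1})^{−1} = −2kθ_k v_{i,k} ε_1^{r(−1)^{n+i}} δ_n^{r(−1)^i} for all n ≥ 1 and 1 ≤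 i ≤ 2k. -/

import Mathlib

open Polynomial

noncomputable section

/-- The rational numbers `v_{i,k}`: `v 1 = 2k-1`,
`v (i+1) * v i = (2k-2i-1)(2k-2i+1)/(i(2k-i))` for `1 ≤ i ≤ 2k-1`. -/
def vRat (k : ℕ) : ℕ → ℚ
  | 0 => 1
  | 1 => 2 * (k : ℚ) - 1
  | j + 2 =>
      ((2 * (k : ℚ) - 2 * ((j : ℚ) + 1) - 1) * (2 * (k : ℚ) - 2 * ((j : ℚ) + 1) + 1) /
          (((j : ℚ) + 1) * (2 * (k : ℚ) - ((j : ℚ) + 1)))) / vRat k (j + 1)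

/-- `θ_k = (-1)^k 2^(-2k) C(2k,k)`. -/
def thetaRat (k : ℕ) : ℚ := (-1) ^ k * ((2 : ℚ) ^ (2 * k))⁻¹ * (Nat.choose (2 * k) k : ℚ)

/-- `ω_k = -(2kθ_k)⁻²`. -/
def omegaRat (k : ℕ) : ℚ := -((2 * (k : ℚ)) * thetaRat k)⁻¹ ^ 2

/-- `k ∈ E(r)` for `r = p^t`: `k = m p^l + (p^l - 1)/2`, `1 ≤ m ≤ (p-1)/2`, `0 ≤ l ≤ t-1`. -/
def memE (p t k : ℕ) : Prop :=
  ∃ m l : ℕ, 1 ≤ m ∧ m ≤ (p - 1) / 2 ∧ l ≤ t - 1 ∧ k = m * p ^ l + (p ^ l - 1) / 2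

/-- `f(n) = (2k+1) n + l - 2k`. -/
def fIdx (k l n : ℕ) : ℕ := (2 * k + 1) * n + l - 2 * k

/-- `i(n) = 1` if `n` is not of the form `f(m)` with `m ≥ 1`, and `i(f(n)) = i(n) + 1`
(for `k ≥ 1`, `l ≥ 1`, the unique `m ≥ 1` with `f(m) = n` is `(n + 2k - l)/(2k+1) < n`). -/
def iIdx (k l : ℕ) : ℕ → ℕ
  | n =>
    if h : 1 ≤ (n + 2 * k - l) / (2 * k + 1) ∧
        fIdx k l ((n + 2 * k - l) / (2 * k + 1)) = n ∧
        (n + 2 * k - l) / (2 * k + 1) < n then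
      iIdx k l ((n + 2 * k - l) / (2 * k + 1)) + 1
    else 1
  termination_by n => n
  decreasing_by exact h.2.2

/-- `θ_k` viewed in a field of characteristic `p` (reduction mod `p`). -/
def thF (Fq : Type*) [Field Fq] (k : ℕ) : Fq := (thetaRat k : Fq)

/-- `ω_k` viewed in a field of characteristic `p` (reduction mod `p`). -/
def omF (Fq : Type*) [Field Fq] (k : ℕ) : Fq := (omegaRat k : Fq)

/-- `v_{i,k}` viewed in a field of characteristic `p` (reduction mod `p`). -/
def vF (Fq : Type*) [Field Fq] (k i : ℕ) : Fq := (vRat k i : Fq)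

/-!
Write `S(n) = δ_n + (ω_k δ_{n-1})⁻¹`, so that `(D₁)` at `n` says `S(n) = 2kθ_k^{i(n)} λ_n^r`.
Every `n ≥ 1` is either at most `l`, or `f(m)`, or `f(m) + i` with `1 ≤ i ≤ 2k`, where `m < n`;
and `i(n) = 1` except at `n = f(m)`, where `i(n) = i(m) + 1`. For `n ≤ l`, `(D₁)` is `(II₀)`
because `ω_k = -(2kθ_k)⁻²`; for `n = f(m) + i`, `(LD)` turns `(D₁)` into `(D₃)`. For `n = f(m)`,
apply the Frobenius `x ↦ x^r` to `(D₁)` at `m`: it fixes the rational constant `2kθ_k^j`, so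
`S(m)^r = 2kθ_k^{i(m)} λ_m^{r²}`, and by `(LD)` this makes `(D₁)` at `f(m)` equivalent to `(D₂)` at
`m`. Strong induction over this decomposition gives the converse.

The constants are nonzero in `F_q` because `k ∈ E(r)` means `2k + 1 = (2a + 1) p^μ` with
`2a + 1 ≤ p`: hence `p ∤ 2k`, and adding `k + k` in base `p` has no carry, so `p ∤ C(2k, k)`
by Kummer's theorem.
-/

lemma fIdx_succ (k l m : ℕ) : fIdx k l (m + 1) = (2 * k + 1) * m + l + 1 := by
  rw [fIdx, Nat.mul_succ]
  omega

lemma lt_fIdx {k l m : ℕ} (hl : 1 ≤ l) (hm : 1 ≤ m) : m < fIdx k l m := by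
  obtain ⟨m, rfl⟩ := Nat.exists_eq_add_of_le' hm
  rw [fIdx_succ]
  nlinarith

lemma fIdx_ne_of_le {k l n m : ℕ} (hn : n ≤ l) (hm : 1 ≤ m) : fIdx k l m ≠ n := by
  obtain ⟨m, rfl⟩ := Nat.exists_eq_add_of_le' hm
  rw [fIdx_succ]
  omega

lemma fIdx_ne_fIdx_add {k l m m' i : ℕ} (hm : 1 ≤ m) (hm' : 1 ≤ m') (hi : 1 ≤ i)
    (hik : i ≤ 2 * k) : fIdx k l m' ≠ fIdx k l m + i := by
  obtain ⟨m, rfl⟩ := Nat.exists_eq_add_of_le' hm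
  obtain ⟨m', rfl⟩ := Nat.exists_eq_add_of_le' hm'
  rw [fIdx_succ, fIdx_succ]
  intro h
  have hsum : (2 * k + 1) * m + i = (2 * k + 1) * m' := by omega
  have hdvd : 2 * k + 1 ∣ i := (Nat.dvd_add_right (dvd_mul_right _ m)).mp (hsum ▸ dvd_mul_right _ _)
  exact absurd (Nat.le_of_dvd (by omega) hdvd) (by omega)

lemma iIdx_eq_one {k l n : ℕ} (h : ∀ m, 1 ≤ m → fIdx k l m ≠ n) : iIdx k l n = 1 := by
  rw [iIdx, dif_neg]
  rintro ⟨hm, hfm, -⟩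
  exact h _ hm hfm

lemma iIdx_fIdx {k l m : ℕ} (hl : 1 ≤ l) (hm : 1 ≤ m) :
    iIdx k l (fIdx k l m) = iIdx k l m + 1 := by
  have hpre : (fIdx k l m + 2 * k - l) / (2 * k + 1) = m := by
    obtain ⟨m, rfl⟩ := Nat.exists_eq_add_of_le' hm
    rw [fIdx_succ, show (2 * k + 1) * m + l + 1 + 2 * k - l = (2 * k + 1) * (m + 1) by ring_nf; omega]
    exact Nat.mul_div_cancel_left _ (by omega)
  rw [iIdx, hpre, dif_pos ⟨hm, rfl, lt_fIdx hl hm⟩]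

lemma exists_eq_fIdx_add {k l n : ℕ} (hl : 1 ≤ l) (hn : l < n) :
    ∃ m i, 1 ≤ m ∧ m < n ∧ i ≤ 2 * k ∧ n = fIdx k l m + i := by
  refine ⟨(n - l - 1) / (2 * k + 1) + 1, (n - l - 1) % (2 * k + 1), Nat.le_add_left 1 _, ?_, ?_, ?_⟩
  · have := Nat.div_le_self (n - l - 1) (2 * k + 1)
    omega
  · have := Nat.mod_lt (n - l - 1) (show 2 * k + 1 > 0 by omega)
    omega
  · have := Nat.div_add_mod (n - l - 1) (2 * k + 1)
    rw [fIdx_succ]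
    omega

theorem fIdx_induction {k l : ℕ} (hl : 1 ≤ l) {P : ℕ → Prop}
    (base : ∀ n, 1 ≤ n → n ≤ l → P n) (step : ∀ m, 1 ≤ m → P m → P (fIdx k l m))
    (step_add : ∀ m, 1 ≤ m → ∀ i, 1 ≤ i → i ≤ 2 * k → P (fIdx k l m + i)) :
    ∀ n, 1 ≤ n → P n := by
  intro n
  induction n using Nat.strong_induction_on with
  | _ n ih =>
    intro hn
    rcases le_or_gt n l with hnl | hln
    · exact base n hn hnl
    obtain ⟨m, i, hm, hmn, hik, rfl⟩ := exists_eq_fIdx_add (k := k) hl hln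
    rcases Nat.eq_zero_or_pos i with rfl | hi
    · exact step m hm (ih m hmn hm)
    · exact step_add m hm i hi hik

lemma memE.exists_two_mul_add_one_eq {p t k : ℕ} (hodd : Odd p) (hk : memE p t k) :
    ∃ m μ, 1 ≤ m ∧ 2 * m + 1 ≤ p ∧ 2 * k + 1 = (2 * m + 1) * p ^ μ := by
  obtain ⟨m, μ, hm, hmp, -, rfl⟩ := hk
  obtain ⟨c, hc⟩ := hodd.pow (n := μ)
  obtain ⟨a, rfl⟩ := hodd
  refine ⟨m, μ, hm, by omega, ?_⟩
  rw [hc, show (2 * c + 1 - 1) / 2 = c by omega]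
  ring

section OddMultipleOfPrimePower

variable {p k m μ : ℕ} (hp : p.Prime) (hmp : 2 * m + 1 ≤ p) (hk : 2 * k + 1 = (2 * m + 1) * p ^ μ)
include hp hmp hk

lemma not_dvd_two_mul_of_two_mul_add_one_eq (hm : 1 ≤ m) : ¬ p ∣ 2 * k := by
  intro hdvd
  rcases Nat.eq_zero_or_pos μ with rfl | hμ
  · rw [pow_zero, mul_one] at hk
    have := Nat.le_of_dvd (by omega) hdvd
    omega
  · have hdvd' : p ∣ 2 * k + 1 := hk ▸ (dvd_pow_self p hμ.ne').mul_left _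
    exact hp.one_lt.ne' (Nat.dvd_one.mp ((Nat.dvd_add_right hdvd).mp hdvd'))

-- For `i ≤ μ`, `p ^ i ∣ 2 * k + 1` forces `2 * (k % p ^ i) + 1 = p ^ i`; for `i > μ`, `2 * k < p ^ i`.
lemma two_mul_mod_pow_lt_of_two_mul_add_one_eq (i : ℕ) : 2 * (k % p ^ i) < p ^ i := by
  rcases le_or_gt i μ with hiμ | hμi
  · have hdvd : p ^ i ∣ 2 * (k % p ^ i) + 1 := by
      have h : p ^ i ∣ 2 * k + 1 := hk ▸ (pow_dvd_pow p hiμ).mul_left _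
      rw [← Nat.mod_add_div k (p ^ i), mul_add, add_right_comm, mul_left_comm] at h
      exact (Nat.dvd_add_left (dvd_mul_right _ _)).mp h
    have hlt : 2 * (k % p ^ i) + 1 < 2 * p ^ i := by
      have := Nat.mod_lt k (pow_pos hp.pos i)
      omega
    obtain ⟨c, hc⟩ := hdvd
    have hc1 : c = 1 := by
      rcases c with _ | _ | c
      · omega
      · rfl
      · have : p ^ i * 2 ≤ p ^ i * (c + 1 + 1) := Nat.mul_le_mul_left _ (by omega)
        omega
    subst hc1
    omega
  · have h2k : 2 * k < p ^ i := by
      have : (2 * m + 1) * p ^ μ ≤ p ^ i :=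
        (Nat.mul_le_mul_right _ hmp).trans (by rw [← pow_succ']; exact Nat.pow_le_pow_right hp.pos hμi)
      omega
    rw [Nat.mod_eq_of_lt (by omega)]
    exact h2k

lemma not_dvd_choose_of_two_mul_add_one_eq : ¬ p ∣ Nat.choose (2 * k) k := by
  have : Fact p.Prime := ⟨hp⟩
  have hval : padicValNat p (Nat.choose (2 * k) k) = 0 := by
    rw [padicValNat_choose (by omega) (Nat.lt_succ_self _), Finset.card_eq_zero,
      Finset.filter_eq_empty_iff]
    intro i _
    have := two_mul_mod_pow_lt_of_two_mul_add_one_eq hp hmp hk i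
    rw [show 2 * k - k = k by omega]
    omega
  rwa [padicValNat.eq_zero_iff, or_iff_right (hp.one_lt.ne'),
    or_iff_right (Nat.choose_pos (by omega)).ne'] at hval

end OddMultipleOfPrimePower

section Constants

variable {K : Type*} [Field K] {k : ℕ}

lemma ratCast_eq_intCast_div {q : ℚ} {a b : ℤ} (hq : q = a / b) (hb : (b : K) ≠ 0) :
    (q : K) = a / b := by
  subst hq
  rw [Rat.cast_div_of_ne_zero (by simp) (by simpa using hb), Rat.cast_intCast, Rat.cast_intCast]

lemma thetaRat_eq (k : ℕ) :
    thetaRat k = (((-1) ^ k * Nat.choose (2 * k) k : ℤ) : ℚ) / ((2 ^ (2 * k) : ℤ) : ℚ) := by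
  rw [thetaRat]
  push_cast
  ring

lemma thF_eq (h2 : (2 : K) ≠ 0) : thF K k = (-1) ^ k * Nat.choose (2 * k) k / 2 ^ (2 * k) := by
  rw [thF, ratCast_eq_intCast_div (thetaRat_eq k) (by push_cast; exact pow_ne_zero _ h2)]
  push_cast
  rfl

lemma thF_ne_zero (h2 : (2 : K) ≠ 0) (hc : (Nat.choose (2 * k) k : K) ≠ 0) : thF K k ≠ 0 := by
  rw [thF_eq h2]
  exact div_ne_zero (mul_ne_zero (pow_ne_zero _ (neg_ne_zero.mpr one_ne_zero)) hc)
    (pow_ne_zero _ h2)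

lemma neg_inv_two_mul_sq_eq (x : K) (h2 : (2 : K) ≠ 0) (hk : (k : K) ≠ 0) (hx : x ≠ 0) :
    -(2 * (k : K) * ((-1) ^ k * x / 2 ^ (2 * k)))⁻¹ ^ 2 = -(2 ^ (4 * k)) / (2 * k * x) ^ 2 := by
  simp only [inv_pow, mul_pow, div_pow, ← pow_mul, mul_comm k 2, (even_two_mul k).neg_one_pow]
  field_simp
  ring

lemma omF_eq (h2k : 2 * (k : K) ≠ 0) (hc : (Nat.choose (2 * k) k : K) ≠ 0) :
    omF K k = -(2 * (k : K) * thF K k)⁻¹ ^ 2 := by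
  have h2 : (2 : K) ≠ 0 := left_ne_zero_of_mul h2k
  have hk : k ≠ 0 := by rintro rfl; simp at h2k
  have hω : omegaRat k =
      ((-(2 ^ (4 * k)) : ℤ) : ℚ) / (((2 * k * Nat.choose (2 * k) k) ^ 2 : ℤ) : ℚ) := by
    rw [omegaRat, thetaRat_eq]
    push_cast
    exact neg_inv_two_mul_sq_eq _ two_ne_zero (by exact_mod_cast hk)
      (by exact_mod_cast (Nat.choose_pos (Nat.le_mul_of_pos_left k two_pos)).ne')
  rw [omF, ratCast_eq_intCast_div hω (by push_cast; exact pow_ne_zero _ (mul_ne_zero h2k hc)),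
    thF_eq h2, neg_inv_two_mul_sq_eq _ h2 (right_ne_zero_of_mul h2k) hc]
  push_cast
  rfl

end Constants

lemma zpow_pow_pow {G : Type*} [DivisionMonoid G] (x : G) (a : ℤ) (p t : ℕ) :
    (x ^ a) ^ (p ^ t) = x ^ ((p ^ t : ℤ) * a) := by
  rw [← zpow_natCast, ← zpow_mul']
  push_cast
  rfl

section Recursion

variable {K : Type*} [Field K] {k l : ℕ} {lam δ : ℕ → K}

lemma inv_omF_mul (h2k : 2 * (k : K) ≠ 0) (hc : (Nat.choose (2 * k) k : K) ≠ 0) (x : K) :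
    (omF K k * x)⁻¹ = -((2 * (k : K) * thF K k) ^ 2 * x⁻¹) := by
  rw [mul_inv, omF_eq h2k hc, inv_neg, inv_pow, inv_inv, neg_mul]

lemma recursion_iff_of_le (h2k : 2 * (k : K) ≠ 0) (hc : (Nat.choose (2 * k) k : K) ≠ 0)
    {n r : ℕ} (hn : n ≤ l) :
    δ n = 2 * (k : K) * thF K k ^ iIdx k l n * lam n ^ r - (omF K k * δ (n - 1))⁻¹ ↔
      δ n = 2 * (k : K) * thF K k * lam n ^ r + (2 * (k : K) * thF K k) ^ 2 * (δ (n - 1))⁻¹ := by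
  rw [iIdx_eq_one fun m hm => fIdx_ne_of_le hn hm, pow_one, inv_omF_mul h2k hc, sub_neg_eq_add]

variable (p : ℕ) [Fact p.Prime] [CharP K p] {t : ℕ} {e1 : K}

lemma two_mul_thF_pow_pow_char_pow (j : ℕ) :
    (2 * (k : K) * thF K k ^ j) ^ (p ^ t) = 2 * (k : K) * thF K k ^ j := by
  rw [← iterateFrobenius_def, map_mul, map_mul, map_pow, map_ofNat, map_natCast, thF,
    map_ratCast]

lemma vF_pow_char_pow (i : ℕ) : vF K k i ^ (p ^ t) = vF K k i := by
  rw [← iterateFrobenius_def, vF, map_ratCast]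

lemma fIdx_recursion_iff (hl : 1 ≤ l) {n : ℕ} (hn : 1 ≤ n)
    (hLD1 : lam (fIdx k l n) = e1 ^ ((-1 : ℤ) ^ n) * lam n ^ (p ^ t))
    (hD1 : δ n = 2 * (k : K) * thF K k ^ iIdx k l n * lam n ^ (p ^ t) - (omF K k * δ (n - 1))⁻¹) :
    δ (fIdx k l n) + (omF K k * δ (fIdx k l n - 1))⁻¹ =
        thF K k * e1 ^ ((p ^ t : ℤ) * (-1) ^ n) *
          (δ n ^ (p ^ t) + (omF K k * δ (n - 1)) ^ (-(p ^ t : ℤ))) ↔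
      δ (fIdx k l n) = 2 * (k : K) * thF K k ^ iIdx k l (fIdx k l n) * lam (fIdx k l n) ^ (p ^ t) -
        (omF K k * δ (fIdx k l n - 1))⁻¹ := by
  have hD1r : δ n ^ (p ^ t) + (omF K k * δ (n - 1)) ^ (-(p ^ t : ℤ)) =
      2 * (k : K) * thF K k ^ iIdx k l n * (lam n ^ (p ^ t)) ^ (p ^ t) := by
    rw [zpow_neg, ← Nat.cast_pow, zpow_natCast, ← inv_pow, ← add_pow_char_pow,
      eq_sub_iff_add_eq.mp hD1, mul_pow, two_mul_thF_pow_pow_char_pow]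
  rw [eq_sub_iff_add_eq, hD1r, iIdx_fIdx hl hn, hLD1, mul_pow, zpow_pow_pow, pow_succ]
  constructor <;> intro h <;> rw [h] <;> ring

lemma fIdx_add_recursion_iff {n i : ℕ} (hn : 1 ≤ n) (hi : 1 ≤ i) (hik : i ≤ 2 * k)
    (hLD2 : lam (fIdx k l n + i) = -vF K k i * e1 ^ ((-1 : ℤ) ^ (n + i)) * δ n ^ ((-1 : ℤ) ^ i)) :
    δ (fIdx k l n + i) + (omF K k * δ (fIdx k l n + i - 1))⁻¹ =
        -(2 * (k : K) * thF K k) * vF K k i * e1 ^ ((p ^ t : ℤ) * (-1) ^ (n + i)) *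
          δ n ^ ((p ^ t : ℤ) * (-1) ^ i) ↔
      δ (fIdx k l n + i) = 2 * (k : K) * thF K k ^ iIdx k l (fIdx k l n + i) *
        lam (fIdx k l n + i) ^ (p ^ t) - (omF K k * δ (fIdx k l n + i - 1))⁻¹ := by
  rw [eq_sub_iff_add_eq, iIdx_eq_one fun m hm => fIdx_ne_fIdx_add hn hm hi hik, pow_one, hLD2,
    mul_pow, mul_pow, ← iterateFrobenius_def, map_neg, iterateFrobenius_def,
    vF_pow_char_pow, zpow_pow_pow, zpow_pow_pow]
  constructor <;> intro h <;> rw [h] <;> ring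

end Recursion

theorem statement9_general (p s t : ℕ) (hp : p.Prime) (hodd : p ≠ 2)
    (Fq : Type*) [Field Fq] [Fintype Fq] (hq : Fintype.card Fq = p ^ s)
    (k : ℕ) (hk : memE p t k) (l : ℕ) (hl : 1 ≤ l)
    (e1 : Fq)
    (lam δ : ℕ → Fq)
    (hLD1 : ∀ n, 1 ≤ n → lam (fIdx k l n) = e1 ^ ((-1 : ℤ) ^ n) * lam n ^ (p ^ t))
    (hLD2 : ∀ n, 1 ≤ n → ∀ i, 1 ≤ i → i ≤ 2 * k →
      lam (fIdx k l n + i) =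
        -vF Fq k i * e1 ^ ((-1 : ℤ) ^ (n + i)) * δ n ^ ((-1 : ℤ) ^ i)) :
    (∀ n, 1 ≤ n →
        δ n = 2 * (k : Fq) * thF Fq k ^ iIdx k l n * lam n ^ (p ^ t) -
          (omF Fq k * δ (n - 1))⁻¹) ↔
    ((∀ n, 1 ≤ n → n ≤ l →
        δ n = 2 * (k : Fq) * thF Fq k * lam n ^ (p ^ t) +
          (2 * (k : Fq) * thF Fq k) ^ 2 * (δ (n - 1))⁻¹) ∧
      (∀ n, 1 ≤ n →
        δ (fIdx k l n) + (omF Fq k * δ (fIdx k l n - 1))⁻¹ =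
          thF Fq k * e1 ^ ((p ^ t : ℤ) * (-1) ^ n) *
            (δ n ^ (p ^ t) + (omF Fq k * δ (n - 1)) ^ (-(p ^ t : ℤ)))) ∧
      (∀ n, 1 ≤ n → ∀ i, 1 ≤ i → i ≤ 2 * k →
        δ (fIdx k l n + i) + (omF Fq k * δ (fIdx k l n + i - 1))⁻¹ =
          -(2 * (k : Fq) * thF Fq k) * vF Fq k i * e1 ^ ((p ^ t : ℤ) * (-1) ^ (n + i)) *
            δ n ^ ((p ^ t : ℤ) * (-1) ^ i))) := by
  have : Fact p.Prime := ⟨hp⟩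
  have : CharP Fq p := charP_of_card_eq_prime_pow hq
  obtain ⟨m, μ, hm, hmp, hkm⟩ := hk.exists_two_mul_add_one_eq (hp.odd_of_ne_two hodd)
  have h2k : 2 * (k : Fq) ≠ 0 := by
    exact_mod_cast (CharP.cast_eq_zero_iff Fq p _).not.mpr
      (not_dvd_two_mul_of_two_mul_add_one_eq hp hmp hkm hm)
  have hc : (Nat.choose (2 * k) k : Fq) ≠ 0 :=
    (CharP.cast_eq_zero_iff Fq p _).not.mpr (not_dvd_choose_of_two_mul_add_one_eq hp hmp hkm)
  have hf : ∀ n, 1 ≤ n → 1 ≤ fIdx k l n := fun n hn => hn.trans (lt_fIdx hl hn).le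
  constructor
  · intro hD1
    exact ⟨fun n hn hnl => (recursion_iff_of_le h2k hc hnl).mp (hD1 n hn),
      fun n hn => (fIdx_recursion_iff p hl hn (hLD1 n hn) (hD1 n hn)).mpr (hD1 _ (hf n hn)),
      fun n hn i hi hik => (fIdx_add_recursion_iff p hn hi hik (hLD2 n hn i hi hik)).mpr
        (hD1 _ ((hf n hn).trans (Nat.le_add_right _ _)))⟩
  · rintro ⟨hII0, hD2, hD3⟩
    exact fIdx_induction hl (fun n hn hnl => (recursion_iff_of_le h2k hc hnl).mpr (hII0 n hn hnl))
      (fun n hn hD1 => (fIdx_recursion_iff p hl hn (hLD1 n hn) hD1).mp (hD2 n hn))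
      (fun n hn i hi hik =>
        (fIdx_add_recursion_iff p hn hi hik (hLD2 n hn i hi hik)).mp (hD3 n hn i hi hik))

/-- Lemma 5.2: given sequences `(λ_n)`, `(δ_n)` in `F_q*` satisfying `(LD)`, the
recursion `(D₁)` holds for all `n ≥ 1` if and only if `(II₀)`, `(D₂)` and `(D₃)` hold. -/
theorem statement9 (p s t : ℕ) (hp : p.Prime) (hodd : p ≠ 2) (hs : 1 ≤ s) (ht : 1 ≤ t)
    (Fq : Type*) [Field Fq] [Fintype Fq] (hq : Fintype.card Fq = p ^ s)
    (k : ℕ) (hk : memE p t k) (l : ℕ) (hl : 1 ≤ l)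
    (e1 : Fq) (he1 : e1 ≠ 0)
    (lam δ : ℕ → Fq) (hlam : ∀ n, 1 ≤ n → lam n ≠ 0) (hδ : ∀ n, δ n ≠ 0)
    (hLD1 : ∀ n, 1 ≤ n → lam (fIdx k l n) = e1 ^ ((-1 : ℤ) ^ n) * lam n ^ (p ^ t))
    (hLD2 : ∀ n, 1 ≤ n → ∀ i, 1 ≤ i → i ≤ 2 * k →
      lam (fIdx k l n + i) =
        -vF Fq k i * e1 ^ ((-1 : ℤ) ^ (n + i)) * δ n ^ ((-1 : ℤ) ^ i)) :
    (∀ n, 1 ≤ n →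
        δ n = 2 * (k : Fq) * thF Fq k ^ iIdx k l n * lam n ^ (p ^ t) -
          (omF Fq k * δ (n - 1))⁻¹) ↔
    ((∀ n, 1 ≤ n → n ≤ l →
        δ n = 2 * (k : Fq) * thF Fq k * lam n ^ (p ^ t) +
          (2 * (k : Fq) * thF Fq k) ^ 2 * (δ (n - 1))⁻¹) ∧
      (∀ n, 1 ≤ n →
        δ (fIdx k l n) + (omF Fq k * δ (fIdx k l n - 1))⁻¹ =
          thF Fq k * e1 ^ ((p ^ t : ℤ) * (-1) ^ n) *
            (δ n ^ (p ^ t) + (omF Fq k * δ (n - 1)) ^ (-(p ^ t : ℤ)))) ∧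
      (∀ n, 1 ≤ n → ∀ i, 1 ≤ i → i ≤ 2 * k →
        δ (fIdx k l n + i) + (omF Fq k * δ (fIdx k l n + i - 1))⁻¹ =
          -(2 * (k : Fq) * thF Fq k) * vF Fq k i * e1 ^ ((p ^ t : ℤ) * (-1) ^ (n + i)) *
            δ n ^ ((p ^ t : ℤ) * (-1) ^ i))) :=
  statement9_general p s t hp hodd Fq hq k hk l hl e1 lam δ hLD1 hLD2
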